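/- Suppose ℓ_i are positive integers with ℓ_i → ∞ and ∑ 2^{-ℓ_i} < ∞. Then for every T ∈ (0,1), there exists k₀ such that the sequence E_k(T) = W_k(T)/Z_k(T) is strictly increasing for k ≥ k₀. -/
import Mathlib


/-- `Z_k(T) = ∑_{i=1}^k 2^{-ℓ_i/T}`. -/
noncomputable def Zk (ℓ : ℕ → ℕ+) (k : ℕ) (T : ℝ) : ℝ :=
  ∑ i ∈ Finset.Icc 1 k, (2 : ℝ) ^ (-(ℓ i : ℝ) / T)

/-- `W_k(T) = ∑_{i=1}^k ℓ_i 2^{-ℓ_i/T}`. -/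
noncomputable def Wk (ℓ : ℕ → ℕ+) (k : ℕ) (T : ℝ) : ℝ :=
  ∑ i ∈ Finset.Icc 1 k, (ℓ i : ℝ) * (2 : ℝ) ^ (-(ℓ i : ℝ) / T)

/-- `E_k(T) = W_k(T)/Z_k(T)`. -/
noncomputable def Ek (ℓ : ℕ → ℕ+) (k : ℕ) (T : ℝ) : ℝ :=
  Wk ℓ k T / Zk ℓ k T

theorem energy_eventually_strictly_increasing (ℓ : ℕ → ℕ+)
    (hinf : Filter.Tendsto (fun i => (ℓ i : ℕ)) Filter.atTop Filter.atTop)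
    (hkraft : Summable fun i => (2 : ℝ) ^ (-(ℓ i : ℝ)))
    (T : ℝ) (hT0 : 0 < T) (hT1 : T < 1) :
    ∃ k₀ : ℕ, 1 ≤ k₀ ∧ ∀ k, k₀ ≤ k → Ek ℓ k T < Ek ℓ (k + 1) T := by
  have hTne : T ≠ 0 := ne_of_gt hT0
  have h2 : (1:ℝ) < 2 := one_lt_two
  set r : ℝ := (2:ℝ) ^ (-(1:ℝ)/T) with hrdef
  have hrpos : 0 < r := Real.rpow_pos_of_pos (by norm_num) _
  set q : ℝ := (2:ℝ) ^ ((1:ℝ) - 1/T) with hqdef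
  have hqpos : 0 < q := Real.rpow_pos_of_pos (by norm_num) _
  have hTinv : 1 < 1/T := by rw [lt_div_iff₀ hT0]; linarith
  have hq1 : q < 1 := Real.rpow_lt_one_of_one_lt_of_neg h2 (by linarith)
  -- r^n = q^n * 2^{-n}
  have hpow : ∀ n : ℕ, (2:ℝ) ^ (-(n:ℝ)/T) = r ^ n := by
    intro n
    rw [← Real.rpow_natCast r n, ← Real.rpow_mul (by norm_num : (0:ℝ) ≤ 2)]
    ring_nf
  have hpow2 : ∀ n : ℕ, (2:ℝ) ^ (-(n:ℝ)) = ((2:ℝ) ^ (-(1:ℝ))) ^ n := by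
    intro n
    rw [← Real.rpow_natCast ((2:ℝ) ^ (-(1:ℝ))) n,
      ← Real.rpow_mul (by norm_num : (0:ℝ) ≤ 2)]
    ring_nf
  have hrq : ∀ n : ℕ, r ^ n = q ^ n * (2:ℝ) ^ (-(n:ℝ)) := by
    intro n
    rw [hpow2, ← mul_pow]
    congr 1
    rw [hqdef, hrdef, ← Real.rpow_add (by norm_num : (0:ℝ) < 2)]
    ring_nf
  -- bound n q^n by C
  have hg : Summable (fun n : ℕ => (n:ℝ) * q ^ n) := by
    have := summable_pow_mul_geometric_of_norm_lt_one (R := ℝ) 1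
      (by rw [Real.norm_eq_abs, abs_of_pos hqpos]; exact hq1)
    simpa using this
  set C : ℝ := ∑' n : ℕ, (n:ℝ) * q ^ n with hCdef
  have hCle : ∀ n : ℕ, (n:ℝ) * q ^ n ≤ C := by
    intro n
    exact Summable.le_tsum hg n (fun j _ => by positivity)
  have hC0 : 0 ≤ C := tsum_nonneg (fun n => by positivity)
  set S : ℝ := ∑' i, (2:ℝ) ^ (-(ℓ i : ℝ)) with hSdef
  -- uniform bound on Wk
  have hWbound : ∀ k : ℕ, Wk ℓ k T ≤ C * S := by
    intro k
    have h1 : Wk ℓ k T ≤ ∑ i ∈ Finset.Icc 1 k, C * (2:ℝ) ^ (-(ℓ i : ℝ)) := by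
      apply Finset.sum_le_sum
      intro i _
      rw [hpow (ℓ i), hrq (ℓ i), ← mul_assoc]
      exact mul_le_mul_of_nonneg_right (hCle (ℓ i))
        (Real.rpow_nonneg (by norm_num) _)
    have h2' : ∑ i ∈ Finset.Icc 1 k, C * (2:ℝ) ^ (-(ℓ i : ℝ)) ≤ C * S := by
      rw [← Finset.mul_sum]
      apply mul_le_mul_of_nonneg_left _ hC0
      exact Summable.sum_le_tsum _ (fun i _ => Real.rpow_nonneg (by norm_num) _) hkraft
    linarith
  set z : ℝ := (2:ℝ) ^ (-(ℓ 1 : ℝ)/T) with hzdef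
  have hz : 0 < z := Real.rpow_pos_of_pos (by norm_num) _
  have hZge : ∀ k : ℕ, 1 ≤ k → z ≤ Zk ℓ k T := by
    intro k hk
    apply Finset.single_le_sum (f := fun i => (2:ℝ) ^ (-(ℓ i : ℝ)/T))
      (fun i _ => Real.rpow_nonneg (by norm_num) _)
    simp [Finset.mem_Icc, hk]
  have hZpos : ∀ k : ℕ, 1 ≤ k → 0 < Zk ℓ k T := fun k hk => lt_of_lt_of_le hz (hZge k hk)
  obtain ⟨N, hN⟩ := Filter.eventually_atTop.mp (hinf.eventually_ge_atTop (⌈C * S / z⌉₊ + 1))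
  refine ⟨max N 1, le_max_right _ _, ?_⟩
  intro k hk
  have hk1 : 1 ≤ k := le_trans (le_max_right _ _) hk
  have hkN : N ≤ k + 1 := le_trans (le_trans (le_max_left _ _) hk) (Nat.le_succ k)
  have hℓ : C * S / z < (ℓ (k+1) : ℝ) := by
    have h1 := hN (k+1) hkN
    have h2' : C * S / z < (⌈C * S / z⌉₊ + 1 : ℕ) := by
      push_cast
      exact lt_of_le_of_lt (Nat.le_ceil _) (by linarith)
    exact lt_of_lt_of_le h2' (by exact_mod_cast h1)
  have hkey : Wk ℓ k T < (ℓ (k+1) : ℝ) * Zk ℓ k T := by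
    have h1 : C * S = (C * S / z) * z := (div_mul_cancel₀ _ (ne_of_gt hz)).symm
    have h2' : (C * S / z) * z < (ℓ (k+1) : ℝ) * z := by
      exact mul_lt_mul_of_pos_right hℓ hz
    have h3 : (ℓ (k+1) : ℝ) * z ≤ (ℓ (k+1) : ℝ) * Zk ℓ k T := by
      apply mul_le_mul_of_nonneg_left (hZge k hk1) (by positivity)
    calc Wk ℓ k T ≤ C * S := hWbound k
      _ = (C * S / z) * z := h1
      _ < (ℓ (k+1) : ℝ) * z := h2'
      _ ≤ (ℓ (k+1) : ℝ) * Zk ℓ k T := h3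
  set x : ℝ := (2:ℝ) ^ (-(ℓ (k+1) : ℝ)/T) with hxdef
  have hx : 0 < x := Real.rpow_pos_of_pos (by norm_num) _
  have hWsucc : Wk ℓ (k+1) T = Wk ℓ k T + (ℓ (k+1) : ℝ) * x := by
    rw [Wk, Finset.sum_Icc_succ_top (by omega : 1 ≤ k + 1)]
    rfl
  have hZsucc : Zk ℓ (k+1) T = Zk ℓ k T + x := by
    rw [Zk, Finset.sum_Icc_succ_top (by omega : 1 ≤ k + 1)]
    rfl
  have hZk : 0 < Zk ℓ k T := hZpos k hk1
  have hZk1 : 0 < Zk ℓ (k+1) T := hZpos (k+1) (by omega)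
  rw [Ek, Ek, div_lt_div_iff₀ hZk hZk1, hWsucc, hZsucc]
  nlinarith [hkey, hx, hZk]
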